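/- Let G be a weighted graph on a finite vertex set V, let P be a partition of V into nonempty parts, and let Q be a partition refining P in which each part of P is divided into at most k parts. If irreg_G(Q) = I, then irreg_G(P) ≥ I/(2k²). -/

import Mathlib

open Finset

/-- The sum of weights over ordered pairs in `A × B` in a weighted graph `w`. -/
def weightSum {V : Type*} (w : V → V → ℝ) (A B : Finset V) : ℝ :=
  ∑ x ∈ A, ∑ y ∈ B, w x y

/-- The weighted edge density between `X` and `Y`. -/
noncomputable def wDensity {V : Type*} (w : V → V → ℝ) (X Y : Finset V) : ℝ :=
  weightSum w X Y / ((X.card : ℝ) * (Y.card : ℝ))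

/-- The irregularity of the pair `X, Y` in a weighted graph `w`. -/
noncomputable def wIrregPair {V : Type*} [DecidableEq V] (w : V → V → ℝ)
    (X Y : Finset V) : ℝ :=
  (X.powerset ×ˢ Y.powerset).sup'
    ⟨(∅, ∅), by simp⟩
    (fun UW => |weightSum w UW.1 UW.2 - (UW.1.card : ℝ) * (UW.2.card : ℝ) * wDensity w X Y|)

/-- The irregularity of a vertex partition in a weighted graph `w`. -/
noncomputable def wIrregPartition {V : Type*} [DecidableEq V] (w : V → V → ℝ)
    (P : Finset (Finset V)) : ℝ :=
  ∑ X ∈ P, ∑ Y ∈ P, wIrregPair w X Y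

/-- `P` is a partition of the vertex set into nonempty parts. -/
def IsPartition {V : Type*} [Fintype V] [DecidableEq V] (P : Finset (Finset V)) : Prop :=
  (∀ p ∈ P, p.Nonempty) ∧ (∀ p ∈ P, ∀ q ∈ P, p ≠ q → Disjoint p q) ∧
    P.biUnion id = Finset.univ

/-! Each part `X` of `Q` inside a part `p` of `P` satisfies `irreg(X, Y) ≤ 2 irreg(p, p')` for
`Y ⊆ p'`: passing from the density of `(p, p')` to that of `(X, Y)` costs
`|X||Y| |d(X, Y) - d(p, p')| = |e(X, Y) - |X||Y| d(p, p')| ≤ irreg(p, p')`. Every pair of parts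
of `P` receives at most `k²` pairs of parts of `Q`, which gives the factor `2k²`. -/

lemma Finset.sum_le_sum_sum_filter {α ι M : Type*} [AddCommMonoid M] [PartialOrder M]
    [IsOrderedAddMonoid M] {s : Finset α} {t : Finset ι} {r : α → ι → Prop}
    [∀ a i, Decidable (r a i)] {g : α → M} (hg : ∀ a ∈ s, 0 ≤ g a)
    (hcover : ∀ a ∈ s, ∃ i ∈ t, r a i) :
    ∑ a ∈ s, g a ≤ ∑ i ∈ t, ∑ a ∈ s.filter (fun a => r a i), g a := by
  calc ∑ a ∈ s, g a ≤ ∑ a ∈ s, ∑ _i ∈ t.filter (r a), g a := by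
        refine sum_le_sum fun a ha => ?_
        obtain ⟨i, hi, hri⟩ := hcover a ha
        exact single_le_sum (f := fun _ => g a) (fun _ _ => hg a ha) (mem_filter.2 ⟨hi, hri⟩)
    _ = ∑ i ∈ t, ∑ a ∈ s.filter (fun a => r a i), g a :=
        sum_comm' fun a i => by simp only [mem_filter]; tauto

section WeightedGraph

variable {V : Type*} [DecidableEq V] (w : V → V → ℝ)

lemma abs_sub_le_wIrregPair {X Y U W : Finset V} (hU : U ⊆ X) (hW : W ⊆ Y) :
    |weightSum w U W - (#U : ℝ) * #W * wDensity w X Y| ≤ wIrregPair w X Y := by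
  have hUW : (U, W) ∈ X.powerset ×ˢ Y.powerset :=
    mem_product.2 ⟨mem_powerset.2 hU, mem_powerset.2 hW⟩
  exact le_sup' (fun UW : Finset V × Finset V =>
    |weightSum w UW.1 UW.2 - (#UW.1 : ℝ) * #UW.2 * wDensity w X Y|) hUW

lemma wIrregPair_nonneg (X Y : Finset V) : 0 ≤ wIrregPair w X Y :=
  (abs_nonneg _).trans (abs_sub_le_wIrregPair w (empty_subset X) (empty_subset Y))

omit [DecidableEq V] in
lemma weightSum_eq_card_mul_card_mul_wDensity (X Y : Finset V) :
    weightSum w X Y = (#X : ℝ) * #Y * wDensity w X Y := by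
  rcases X.eq_empty_or_nonempty with rfl | hX
  · simp [weightSum]
  rcases Y.eq_empty_or_nonempty with rfl | hY
  · simp [weightSum]
  have : (#X : ℝ) * #Y ≠ 0 := by positivity
  rw [wDensity, mul_div_cancel₀ _ this]

lemma wIrregPair_le_two_mul_of_subset {X Y p p' : Finset V} (hX : X ⊆ p) (hY : Y ⊆ p') :
    wIrregPair w X Y ≤ 2 * wIrregPair w p p' := by
  refine sup'_le _ _ fun ⟨U, W⟩ hUW => ?_
  obtain ⟨hU, hW⟩ : U ⊆ X ∧ W ⊆ Y := by simpa only [mem_product, mem_powerset] using hUW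
  set d := wDensity w X Y
  set D := wDensity w p p'
  have hdensity : (#X : ℝ) * #Y * |d - D| ≤ wIrregPair w p p' := by
    have := abs_sub_le_wIrregPair w hX hY
    rwa [weightSum_eq_card_mul_card_mul_wDensity w X Y, ← mul_sub, abs_mul,
      abs_of_nonneg (by positivity)] at this
  calc |weightSum w U W - #U * #W * d|
      ≤ |weightSum w U W - #U * #W * D| + |#U * #W * D - #U * #W * d| := abs_sub_le _ _ _
    _ = |weightSum w U W - #U * #W * D| + #U * #W * |d - D| := by
        rw [← mul_sub, abs_mul, abs_of_nonneg (by positivity : (0 : ℝ) ≤ #U * #W),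
          abs_sub_comm D d]
    _ ≤ wIrregPair w p p' + #X * #Y * |d - D| := by
        gcongr
        exact abs_sub_le_wIrregPair w (hU.trans hX) (hW.trans hY)
    _ ≤ 2 * wIrregPair w p p' := by linarith

lemma sum_sum_wIrregPair_le {A B : Finset (Finset V)} {p p' : Finset V} (hA : ∀ X ∈ A, X ⊆ p)
    (hB : ∀ Y ∈ B, Y ⊆ p') :
    ∑ X ∈ A, ∑ Y ∈ B, wIrregPair w X Y ≤ #A * #B * (2 * wIrregPair w p p') := by
  calc ∑ X ∈ A, ∑ Y ∈ B, wIrregPair w X Y = ∑ XY ∈ A ×ˢ B, wIrregPair w XY.1 XY.2 :=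
        (sum_product' _ _ _).symm
    _ ≤ #(A ×ˢ B) • (2 * wIrregPair w p p') := sum_le_card_nsmul _ _ _ fun XY hXY =>
        wIrregPair_le_two_mul_of_subset w (hA _ (mem_product.1 hXY).1) (hB _ (mem_product.1 hXY).2)
    _ = #A * #B * (2 * wIrregPair w p p') := by rw [card_product, nsmul_eq_mul, Nat.cast_mul]

lemma wIrregPartition_le_sum_sum_of_refines {P Q : Finset (Finset V)}
    (hrefines : ∀ q ∈ Q, ∃ p ∈ P, q ⊆ p) :
    wIrregPartition w Q ≤ ∑ p ∈ P, ∑ p' ∈ P,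
      ∑ X ∈ Q.filter (· ⊆ p), ∑ Y ∈ Q.filter (· ⊆ p'), wIrregPair w X Y := by
  have hnonneg : ∀ X Y, 0 ≤ wIrregPair w X Y := wIrregPair_nonneg w
  calc wIrregPartition w Q
      ≤ ∑ X ∈ Q, ∑ p' ∈ P, ∑ Y ∈ Q.filter (· ⊆ p'), wIrregPair w X Y :=
        sum_le_sum fun X _ => sum_le_sum_sum_filter (fun Y _ => hnonneg X Y) hrefines
    _ ≤ ∑ p ∈ P, ∑ X ∈ Q.filter (· ⊆ p),
          ∑ p' ∈ P, ∑ Y ∈ Q.filter (· ⊆ p'), wIrregPair w X Y :=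
        sum_le_sum_sum_filter (fun X _ => sum_nonneg fun _ _ => sum_nonneg fun Y _ => hnonneg X Y)
          hrefines
    _ = _ := sum_congr rfl fun _ _ => sum_comm

end WeightedGraph

theorem irreg_of_refinement_general {V : Type*} [DecidableEq V]
    (w : V → V → ℝ)
    (P Q : Finset (Finset V))
    (hrefines : ∀ q ∈ Q, ∃ p ∈ P, q ⊆ p)
    (k : ℕ) (hk : ∀ p ∈ P, (Q.filter (fun q => q ⊆ p)).card ≤ k)
    (I : ℝ) (hI : wIrregPartition w Q = I) :
    I / (2 * (k : ℝ) ^ 2) ≤ wIrregPartition w P := by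
  have hP_nonneg : 0 ≤ wIrregPartition w P :=
    sum_nonneg fun _ _ => sum_nonneg fun _ _ => wIrregPair_nonneg w _ _
  refine div_le_of_le_mul₀ (by positivity) hP_nonneg ?_
  calc I = wIrregPartition w Q := hI.symm
    _ ≤ ∑ p ∈ P, ∑ p' ∈ P,
          ∑ X ∈ Q.filter (· ⊆ p), ∑ Y ∈ Q.filter (· ⊆ p'), wIrregPair w X Y :=
        wIrregPartition_le_sum_sum_of_refines w hrefines
    _ ≤ ∑ p ∈ P, ∑ p' ∈ P, (k : ℝ) * k * (2 * wIrregPair w p p') := by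
        refine sum_le_sum fun p hp => sum_le_sum fun p' hp' => ?_
        refine (sum_sum_wIrregPair_le w (fun X hX => (mem_filter.1 hX).2)
          (fun Y hY => (mem_filter.1 hY).2)).trans ?_
        have := wIrregPair_nonneg w p p'
        gcongr <;> exact_mod_cast hk _ ‹_›
    _ = wIrregPartition w P * (2 * (k : ℝ) ^ 2) := by
        simp only [wIrregPartition, sum_mul]
        exact sum_congr rfl fun _ _ => sum_congr rfl fun _ _ => by ring

/-- If `Q` refines a partition `P` with each part of `P` divided into at most `k` parts,
and `Q` has irregularity `I`, then `P` has irregularity at least `I/(2k²)`. -/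
theorem irreg_of_refinement {V : Type*} [Fintype V] [DecidableEq V]
    (w : V → V → ℝ) (hsymm : ∀ x y, w x y = w y x) (h0 : ∀ x y, 0 ≤ w x y)
    (h1 : ∀ x y, w x y ≤ 1)
    (P Q : Finset (Finset V)) (hP : IsPartition P) (hQ : IsPartition Q)
    (hrefines : ∀ q ∈ Q, ∃ p ∈ P, q ⊆ p)
    (k : ℕ) (hk : ∀ p ∈ P, (Q.filter (fun q => q ⊆ p)).card ≤ k)
    (I : ℝ) (hI : wIrregPartition w Q = I) :
    I / (2 * (k : ℝ) ^ 2) ≤ wIrregPartition w P :=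
  irreg_of_refinement_general w P Q hrefines k hk I hI
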